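/- Let S be the set of sequences s in {0,1,2}^N such that s_k != 2 whenever k is congruent to 2 mod 3. Then for all s, t in S, the real numbers x = sum_k s_k 3^(-(k+1)) and y = sum_k t_k 3^(-(k+1)) satisfy |x - y| >= 3^(-4) * delta_3(s, t). In particular, on such sequences the absolute-value metric on the represented reals is equivalent to the ternary ultrametric. -/

import Mathlib

-- The ternary ultrametric `δ₃` on ternary sequences.
open Classical in
noncomputable def delta3 (s t : ℕ → Fin 3) : ℝ :=
  if h : s = t then 0
  else (3 : ℝ) ^ (-(Nat.find (show ∃ k, s k ≠ t k by
    by_contra hc; push_neg at hc; exact h (funext hc)) : ℤ))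

-- The real number represented in base 3 by a ternary digit sequence.
noncomputable def val3 (s : ℕ → Fin 3) : ℝ := ∑' k, (s k : ℝ) / 3 ^ (k + 1)

/-!
Let `m` be the first index at which `s` and `t` differ, say `t m < s m`. Stripping the common
prefix, `val3 s - val3 t` is `3⁻ᵐ` times the difference of the tails, whose leading digits differ
by at least one. That difference can only approach zero through a carry `0.1000… = 0.0222…`,
which needs the digit `2` in every later position of the smaller tail; but one of the positions
`m + 1, m + 2, m + 3` is `≡ 2 mod 3`, so the carry breaks there and leaves a gap of `3⁻⁽ᵐ⁺⁴⁾`.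
-/

open PiNat

namespace Real

theorem ofDigits_sub_ofDigits_of_forall_lt_eq {b n : ℕ} {x y : ℕ → Fin b}
    (hxy : ∀ i < n, x i = y i) :
    ofDigits x - ofDigits y =
      ((b : ℝ) ^ n)⁻¹ * (ofDigits (fun i ↦ x (i + n)) - ofDigits (fun i ↦ y (i + n))) := by
  have hprefix :
      ∑ i ∈ Finset.range n, ofDigitsTerm x i = ∑ i ∈ Finset.range n, ofDigitsTerm y i :=
    Finset.sum_congr rfl fun i hi ↦ by rw [ofDigitsTerm, hxy i (Finset.mem_range.mp hi)]; rfl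
  rw [ofDigits_eq_sum_add_ofDigits x n, ofDigits_eq_sum_add_ofDigits y n, hprefix]
  ring

/- Adding `b - 1` to every digit difference makes all terms nonnegative, and the added terms
sum to `0.(b-1)(b-1)… = 1`; the terms at `0` and `i` alone already contribute `1 + b⁻⁽ⁱ⁺¹⁾`. -/
theorem inv_pow_le_ofDigits_sub_ofDigits {b i : ℕ} {x y : ℕ → Fin b} (h0 : y 0 < x 0)
    (hi : i ≠ 0) (hyi : (y i : ℕ) + 2 ≤ x i + b) :
    ((b : ℝ) ^ (i + 1))⁻¹ ≤ ofDigits x - ofDigits y := by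
  have hb : 1 < b := by omega
  set top : ℕ → Fin b := fun _ ↦ ⟨b - 1, Nat.sub_one_lt_of_lt hb⟩
  set e : ℕ → ℝ := fun k ↦ ofDigitsTerm x k - ofDigitsTerm y k + ofDigitsTerm top k
  have he_summable : Summable e :=
    (summable_ofDigitsTerm.sub summable_ofDigitsTerm).add summable_ofDigitsTerm
  have he_tsum : ∑' k, e k = ofDigits x - ofDigits y + 1 := by
    rw [← ofDigits_const_last_eq_one' hb, ofDigits, ofDigits, ofDigits,
      ← Summable.tsum_sub summable_ofDigitsTerm summable_ofDigitsTerm,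
      ← Summable.tsum_add (summable_ofDigitsTerm.sub summable_ofDigitsTerm) summable_ofDigitsTerm]
  have he_eq : ∀ k, e k = ((x k : ℝ) - y k + (b - 1)) * ((b : ℝ) ^ (k + 1))⁻¹ := fun k ↦ by
    simp only [e, top, ofDigitsTerm, Nat.cast_pred (by omega : 0 < b)]
    ring
  have hy_le : ∀ k, ((y k : ℕ) : ℝ) ≤ b - 1 := fun k ↦ by
    rw [le_sub_iff_add_le]
    exact_mod_cast (y k).isLt
  have he_nonneg : ∀ k, 0 ≤ e k := fun k ↦ by
    rw [he_eq]
    exact mul_nonneg (by linarith [hy_le k, (x k : ℕ).cast_nonneg (α := ℝ)]) (by positivity)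
  have he_zero : 1 ≤ e 0 := by
    rw [he_eq, zero_add, pow_one, le_mul_inv_iff₀ (by positivity)]
    have : ((y 0 : ℕ) : ℝ) + 1 ≤ x 0 := by exact_mod_cast h0
    linarith
  have he_i : ((b : ℝ) ^ (i + 1))⁻¹ ≤ e i := by
    rw [he_eq]
    refine le_mul_of_one_le_left (by positivity) ?_
    have : ((y i : ℕ) : ℝ) + 2 ≤ x i + b := by exact_mod_cast hyi
    linarith
  have hpair := he_summable.sum_le_tsum {0, i} fun k _ ↦ he_nonneg k
  rw [Finset.sum_pair hi.symm, he_tsum] at hpair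
  linarith

end Real

theorem val3_eq_ofDigits (s : ℕ → Fin 3) : val3 s = Real.ofDigits s := by
  simp only [val3, Real.ofDigits, Real.ofDigitsTerm, div_eq_mul_inv]
  norm_cast

theorem delta3_eq_inv_pow_firstDiff {s t : ℕ → Fin 3} (h : s ≠ t) :
    delta3 s t = ((3 : ℝ) ^ firstDiff s t)⁻¹ := by
  have hex : ∃ k, s k ≠ t k := Function.ne_iff.mp h
  have hfind : Nat.find hex = firstDiff s t :=
    (Nat.find_eq_iff hex).mpr
      ⟨apply_firstDiff_ne h, fun k hk ↦ not_not.mpr (apply_eq_of_lt_firstDiff hk)⟩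
  rw [delta3, dif_neg h, zpow_neg, zpow_natCast]
  simp [hfind]

theorem inv_pow_le_val3_sub_val3 {s t : ℕ → Fin 3} (ht : ∀ k, k % 3 = 2 → t k ≠ 2) {m : ℕ}
    (hm : ∀ k < m, s k = t k) (hlt : t m < s m) :
    (3 : ℝ) ^ (-4 : ℤ) * ((3 : ℝ) ^ m)⁻¹ ≤ val3 s - val3 t := by
  obtain ⟨i, hi_pos, hi_le, hi_mod⟩ : ∃ i, 0 < i ∧ i ≤ 3 ∧ (i + m) % 3 = 2 :=
    ⟨3 - (m + 1) % 3, by omega, by omega, by omega⟩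
  have hti : (t (i + m) : ℕ) ≤ 1 := by
    have := (t (i + m)).isLt
    have := Fin.val_ne_of_ne (ht _ hi_mod)
    omega
  have htail := Real.inv_pow_le_ofDigits_sub_ofDigits (x := fun k ↦ s (k + m))
    (y := fun k ↦ t (k + m)) (by simpa using hlt) hi_pos.ne' (by omega)
  rw [val3_eq_ofDigits, val3_eq_ofDigits, Real.ofDigits_sub_ofDigits_of_forall_lt_eq hm,
    mul_comm]
  refine mul_le_mul_of_nonneg_left (le_trans ?_ htail) (by positivity)
  rw [← zpow_natCast, ← zpow_neg]
  exact zpow_le_zpow_right₀ (by norm_num) (by omega)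

theorem stmt_3 (s t : ℕ → Fin 3)
    (hs : ∀ k, k % 3 = 2 → s k ≠ 2) (ht : ∀ k, k % 3 = 2 → t k ≠ 2) :
    |val3 s - val3 t| ≥ (3 : ℝ) ^ (-4 : ℤ) * delta3 s t := by
  by_cases hst : s = t
  · subst hst
    simp [delta3]
  rw [delta3_eq_inv_pow_firstDiff hst, ge_iff_le]
  rcases lt_or_gt_of_ne (apply_firstDiff_ne hst) with hlt | hlt
  · rw [abs_sub_comm]
    exact (inv_pow_le_val3_sub_val3 hs (fun k hk ↦ (apply_eq_of_lt_firstDiff hk).symm) hlt).trans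
      (le_abs_self _)
  · exact (inv_pow_le_val3_sub_val3 ht (fun k hk ↦ apply_eq_of_lt_firstDiff hk) hlt).trans
      (le_abs_self _)
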